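/- arXiv:2210.10937 — 4 statements merged into one kernel-verified Lean document; each statement's English description precedes it below -/
import Mathlib

section
/- Let E_I be orthogonal projections onto F(I) arising from a probability P on a finite product configuration space. If E_I ∘ E_J = E_{I∩J} for all subsets I, J of sites, then sites are independent: for disjoint I and J and functions f supported on I and g supported on J, E(fg) = E(f)E(g). -/
/-- `Depends f I` : the configuration function `f` depends only on the sites in `I`. -/
def Depends {S : Type*} {Sps : S → Type*} (f : (∀ i, Sps i) → ℂ) (I : Finset S) : Prop :=
  ∀ x y : ∀ i, Sps i, (∀ i ∈ I, x i = y i) → f x = f y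

theorem intersection_property_implies_independence {S : Type*} [Fintype S] [DecidableEq S]
    {Sps : S → Type*} [∀ i, Fintype (Sps i)]
    (P : (∀ i, Sps i) → ℝ) (hP : ∀ x, 0 < P x) (hsum : ∑ x, P x = 1)
    (E : Finset S → (((∀ i, Sps i) → ℂ) →ₗ[ℂ] ((∀ i, Sps i) → ℂ)))
    (hrange : ∀ I f, Depends (E I f) I)
    (hfix : ∀ I f, Depends f I → E I f = f)
    (hadj : ∀ (I : Finset S) (f g : (∀ i, Sps i) → ℂ),
      ∑ x, (P x : ℂ) * (starRingEnd ℂ) ((E I f) x) * g x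
        = ∑ x, (P x : ℂ) * (starRingEnd ℂ) (f x) * (E I g) x)
    (hcap : ∀ I J : Finset S, (E I) ∘ₗ (E J) = E (I ∩ J)) :
    ∀ (I J : Finset S), Disjoint I J →
      ∀ f g : (∀ i, Sps i) → ℂ, Depends f I → Depends g J →
        (∑ x, (P x : ℂ) * (f x * g x))
          = (∑ x, (P x : ℂ) * f x) * (∑ x, (P x : ℂ) * g x) := by
  intro I J hIJ f g hf hg
  have hne : Nonempty (∀ i, Sps i) := by
    by_contra hne
    rw [not_nonempty_iff] at hne
    rw [Finset.univ_eq_empty, Finset.sum_empty] at hsum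
    exact zero_ne_one hsum
  obtain ⟨x0⟩ := hne
  have hPsum : (∑ x, (P x : ℂ)) = 1 := by
    rw [← Complex.ofReal_sum, hsum, Complex.ofReal_one]
  have h1 : Depends (Sps := Sps) (fun _ => (1 : ℂ)) (∅ : Finset S) := fun _ _ _ => rfl
  have hE1 : E ∅ (fun _ => (1 : ℂ)) = fun _ => (1 : ℂ) := hfix _ _ h1
  -- E ∅ h is the constant function with value ∑ P h
  have hconst : ∀ h : (∀ i, Sps i) → ℂ,
      E ∅ h = fun _ => ∑ x, (P x : ℂ) * h x := by
    intro h
    have hc : ∀ x, (E ∅ h) x = (E ∅ h) x0 := fun x =>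
      hrange ∅ h x x0 (by simp)
    have key := hadj ∅ (fun _ => (1 : ℂ)) h
    rw [hE1] at key
    simp only [map_one, one_mul, mul_one] at key
    have hval : ∑ x, (P x : ℂ) * h x = (E ∅ h) x0 := by
      rw [key]
      calc ∑ x, (P x : ℂ) * (E ∅) h x
          = ∑ x, (P x : ℂ) * (E ∅) h x0 :=
            Finset.sum_congr rfl fun x _ => by rw [hc x]
        _ = (E ∅) h x0 := by rw [← Finset.sum_mul, hPsum, one_mul]
    funext x
    rw [hc x, hval]
  -- E I g is constant ∑ P g
  have hEIg : E I g = fun _ => ∑ x, (P x : ℂ) * g x := by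
    have : E I g = E (I ∩ J) g := by
      conv_lhs => rw [← hfix J g hg]
      rw [← LinearMap.comp_apply, hcap]
    rw [this, Finset.disjoint_iff_inter_eq_empty.mp hIJ, hconst g]
  -- conj ∘ f depends on I
  have hF : Depends (fun x => (starRingEnd ℂ) (f x)) I := fun x y hxy =>
    congrArg _ (hf x y hxy)
  have hEF := hfix I _ hF
  have key := hadj I (fun x => (starRingEnd ℂ) (f x)) g
  rw [hEF, hEIg] at key
  simp only [Complex.conj_conj] at key
  calc ∑ x, (P x : ℂ) * (f x * g x)
      = ∑ x, (P x : ℂ) * f x * g x := by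
        exact Finset.sum_congr rfl fun x _ => (mul_assoc _ _ _).symm
    _ = ∑ x, (P x : ℂ) * f x * (∑ y, (P y : ℂ) * g y) := key
    _ = (∑ x, (P x : ℂ) * f x) * (∑ x, (P x : ℂ) * g x) := by
        rw [Finset.sum_mul]
end

section
/- Under a product probability on a finite product configuration space, define cluster operators C_I by E_I = ∑_{J⊆I} C_J. Then C_I ∘ C_J = C_I if I = J and C_I ∘ C_J = 0 if I ≠ J. -/
namespace Finset

theorem eq_of_sum_powerset_eq {α M : Type*} [DecidableEq α] [AddCancelCommMonoid M]
    {f g : Finset α → M}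
    (h : ∀ I : Finset α, ∑ J ∈ I.powerset, f J = ∑ J ∈ I.powerset, g J) : f = g := by
  funext I
  induction I using Finset.strongInduction with
  | _ I ih =>
    have hI := h I
    rw [← add_sum_erase _ _ (mem_powerset_self I), ← add_sum_erase _ g (mem_powerset_self I),
      ← ssubsets, sum_congr rfl fun J hJ => ih J (mem_ssubsets.1 hJ)] at hI
    exact add_right_cancel hI

end Finset

section Cluster

variable {α R : Type*} [DecidableEq α] [NonUnitalRing R] {E C : Finset α → R}

theorem mul_cluster_eq_ite (hEE : ∀ I J, E I * E J = E (I ∩ J))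
    (hEC : ∀ I, E I = ∑ J ∈ I.powerset, C J) (K J : Finset α) :
    E K * C J = if J ⊆ K then C J else 0 := by
  revert J
  rw [← funext_iff]
  refine Finset.eq_of_sum_powerset_eq fun J => ?_
  have hpow : (K ∩ J).powerset = J.powerset.filter (· ⊆ K) := by
    ext L
    simp only [Finset.mem_powerset, Finset.mem_filter, Finset.subset_inter_iff, and_comm]
  rw [← Finset.mul_sum, ← hEC, hEE, hEC, hpow, Finset.sum_filter]

theorem cluster_mul_cluster_eq_ite (hEE : ∀ I J, E I * E J = E (I ∩ J))
    (hEC : ∀ I, E I = ∑ J ∈ I.powerset, C J) (I J : Finset α) :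
    C I * C J = if I = J then C I else 0 := by
  revert I
  rw [← funext_iff]
  refine Finset.eq_of_sum_powerset_eq fun I => ?_
  simp only [← Finset.sum_mul, ← hEC, mul_cluster_eq_ite hEE hEC, Finset.sum_ite_eq',
    Finset.mem_powerset]

end Cluster

namespace ProductWeight

open ComplexConjugate

variable {S : Type*} {Sps : S → Type*} [DecidableEq S]

theorem piecewise_swap_involutive (I : Finset S) :
    Function.Involutive fun q : (∀ i, Sps i) × (∀ i, Sps i) =>
      (I.piecewise q.1 q.2, I.piecewise q.2 q.1) := by
  rintro ⟨y, z⟩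
  ext i <;> by_cases hi : i ∈ I <;> simp [hi]

theorem piecewise_piecewise_eq_piecewise_inter (I J : Finset S)
    (x y z : ∀ i, Sps i) :
    J.piecewise (I.piecewise x y) z = (I ∩ J).piecewise x (J.piecewise y z) := by
  ext i
  by_cases hJ : i ∈ J <;> by_cases hI : i ∈ I <;> simp [hI, hJ]

variable [Fintype S]

section Weight

variable {R : Type*} [CommSemiring R]

def weight (p : ∀ i, Sps i → R) (x : ∀ i, Sps i) : R := ∏ i, p i (x i)

theorem weight_piecewise_mul_weight_piecewise (p : ∀ i, Sps i → R)
    (I : Finset S) (y z : ∀ i, Sps i) :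
    weight p (I.piecewise y z) * weight p (I.piecewise z y) = weight p y * weight p z := by
  simp only [weight, ← Finset.prod_mul_distrib]
  refine Finset.prod_congr rfl fun i _ => ?_
  by_cases hi : i ∈ I <;> simp [hi, mul_comm]

variable [∀ i, Fintype (Sps i)]

def condExp (p : ∀ i, Sps i → R) (I : Finset S) (f : (∀ i, Sps i) → R) (x : ∀ i, Sps i) : R :=
  ∑ y, weight p y * f (I.piecewise x y)

variable {p : ∀ i, Sps i → R}

theorem sum_weight (hsum : ∀ i, ∑ s, p i s = 1) : ∑ x, weight p x = 1 := by
  simp only [weight, ← Fintype.prod_sum, hsum, Finset.prod_const_one]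

theorem sum_weight_mul_weight_mul_piecewise (hsum : ∀ i, ∑ s, p i s = 1) (I : Finset S)
    (g : (∀ i, Sps i) → R) :
    ∑ y, ∑ z, weight p y * weight p z * g (I.piecewise y z) = ∑ y, weight p y * g y := by
  calc ∑ y, ∑ z, weight p y * weight p z * g (I.piecewise y z)
      = ∑ q : (∀ i, Sps i) × (∀ i, Sps i), weight p q.1 * weight p q.2 * g q.1 := by
        rw [← Fintype.sum_prod_type', ← Equiv.sum_comp ((piecewise_swap_involutive I).toPerm _)]
        refine Fintype.sum_congr _ _ fun ⟨y, z⟩ => ?_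
        have hy := congrArg Prod.fst (piecewise_swap_involutive I (y, z))
        simp only [Function.Involutive.coe_toPerm] at hy ⊢
        rw [weight_piecewise_mul_weight_piecewise, hy]
    _ = ∑ y, weight p y * g y := by
        simp only [Fintype.sum_prod_type, mul_right_comm _ _ (g _), ← Finset.mul_sum,
          sum_weight hsum, mul_one]

theorem condExp_condExp (hsum : ∀ i, ∑ s, p i s = 1) (I J : Finset S) (f : (∀ i, Sps i) → R) :
    condExp p I (condExp p J f) = condExp p (I ∩ J) f := by
  funext x
  simp only [condExp, Finset.mul_sum, piecewise_piecewise_eq_piecewise_inter, ← mul_assoc]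
  exact sum_weight_mul_weight_mul_piecewise hsum J fun u => f ((I ∩ J).piecewise x u)

end Weight

variable [∀ i, Fintype (Sps i)]

def wInner (p : ∀ i, Sps i → ℝ) (f g : (∀ i, Sps i) → ℂ) : ℂ :=
  ∑ x, weight (fun i s => (p i s : ℂ)) x * conj (f x) * g x

theorem wInner_sub_right (p : ∀ i, Sps i → ℝ) (f g h : (∀ i, Sps i) → ℂ) :
    wInner p f (g - h) = wInner p f g - wInner p f h := by
  simp only [wInner, Pi.sub_apply, mul_sub, Finset.sum_sub_distrib]

theorem eq_zero_of_wInner_self_eq_zero {p : ∀ i, Sps i → ℝ} (hp : ∀ i s, 0 < p i s)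
    {f : (∀ i, Sps i) → ℂ} (hf : wInner p f f = 0) : f = 0 := by
  have hre : ∑ x, (∏ i, p i (x i)) * Complex.normSq (f x) = 0 := by
    rw [← Complex.ofReal_inj, Complex.ofReal_zero, ← hf]
    push_cast
    refine Finset.sum_congr rfl fun x _ => ?_
    rw [mul_assoc, mul_comm (conj _), Complex.mul_conj]
    rfl
  have hpos : ∀ x : ∀ i, Sps i, 0 < ∏ i, p i (x i) := fun x =>
    Finset.prod_pos fun i _ => hp i (x i)
  funext x
  have := (Finset.sum_eq_zero_iff_of_nonneg fun y _ =>
    mul_nonneg (hpos y).le (Complex.normSq_nonneg (f y))).1 hre x (Finset.mem_univ x)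
  simpa [(hpos x).ne'] using this

theorem eq_of_wInner_eq {p : ∀ i, Sps i → ℝ} (hp : ∀ i s, 0 < p i s) {I : Finset S}
    {u v : (∀ i, Sps i) → ℂ} (hu : Depends u I) (hv : Depends v I)
    (h : ∀ g, Depends g I → wInner p g u = wInner p g v) : u = v := by
  have hdep : Depends (u - v) I := fun x y hxy => by
    simp only [Pi.sub_apply, hu x y hxy, hv x y hxy]
  rw [← sub_eq_zero]
  exact eq_zero_of_wInner_self_eq_zero hp <| by rw [wInner_sub_right, h _ hdep, sub_self]

theorem depends_condExp (p : ∀ i, Sps i → ℂ) (I : Finset S) (f : (∀ i, Sps i) → ℂ) :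
    Depends (condExp p I f) I := by
  intro x x' h
  simp only [condExp]
  congr! 3 with y
  exact Finset.piecewise_congr (s := I) h fun _ _ => rfl

theorem wInner_condExp {p : ∀ i, Sps i → ℝ} (hsum : ∀ i, ∑ s, p i s = 1) {I : Finset S}
    {g : (∀ i, Sps i) → ℂ} (hg : Depends g I) (f : (∀ i, Sps i) → ℂ) :
    wInner p g (condExp (fun i s => (p i s : ℂ)) I f) = wInner p g f := by
  have hsum' : ∀ i, ∑ s, (p i s : ℂ) = 1 := fun i => by exact_mod_cast hsum i
  have hg' : ∀ x y, g (I.piecewise x y) = g x := fun x y =>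
    hg _ _ fun i hi => Finset.piecewise_eq_of_mem _ _ _ hi
  set w := weight fun i s => (p i s : ℂ)
  calc ∑ x, w x * conj (g x) * ∑ y, w y * f (I.piecewise x y)
      = ∑ x, ∑ y, w x * w y * (conj (g (I.piecewise x y)) * f (I.piecewise x y)) := by
        simp only [hg', Finset.mul_sum]
        exact Fintype.sum_congr _ _ fun x => Fintype.sum_congr _ _ fun y => by ring
    _ = ∑ x, w x * (conj (g x) * f x) :=
        sum_weight_mul_weight_mul_piecewise hsum' I fun x => conj (g x) * f x
    _ = ∑ x, w x * conj (g x) * f x := by simp only [mul_assoc]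

theorem eq_condExp {p : ∀ i, Sps i → ℝ} (hp : ∀ i s, 0 < p i s) (hsum : ∀ i, ∑ s, p i s = 1)
    {I : Finset S} {T : ((∀ i, Sps i) → ℂ) → (∀ i, Sps i) → ℂ}
    (hrange : ∀ f, Depends (T f) I) (hfix : ∀ f, Depends f I → T f = f)
    (hadj : ∀ f g, wInner p (T f) g = wInner p f (T g)) (f : (∀ i, Sps i) → ℂ) :
    T f = condExp (fun i s => (p i s : ℂ)) I f :=
  eq_of_wInner_eq hp (hrange f) (depends_condExp _ I f) fun g hg => by
    rw [wInner_condExp hsum hg, ← hadj, hfix g hg]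

end ProductWeight

theorem cluster_operators_orthogonal_idempotent {S : Type*} [Fintype S] [DecidableEq S]
    {Sps : S → Type*} [∀ i, Fintype (Sps i)]
    (p : ∀ i, Sps i → ℝ) (hp : ∀ i s, 0 < p i s) (hsum : ∀ i, ∑ s, p i s = 1)
    (E : Finset S → (((∀ i, Sps i) → ℂ) →ₗ[ℂ] ((∀ i, Sps i) → ℂ)))
    (hrange : ∀ I f, Depends (E I f) I)
    (hfix : ∀ I f, Depends f I → E I f = f)
    (hadj : ∀ (I : Finset S) (f g : (∀ i, Sps i) → ℂ),
      ∑ x, (∏ i, (p i (x i) : ℂ)) * (starRingEnd ℂ) ((E I f) x) * g x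
        = ∑ x, (∏ i, (p i (x i) : ℂ)) * (starRingEnd ℂ) (f x) * (E I g) x)
    (C : Finset S → (((∀ i, Sps i) → ℂ) →ₗ[ℂ] ((∀ i, Sps i) → ℂ)))
    (hEC : ∀ I : Finset S, E I = ∑ J ∈ I.powerset, C J) :
    ∀ I J : Finset S, (C I) ∘ₗ (C J) = if I = J then C I else 0 := by
  have hE : ∀ I f, E I f = ProductWeight.condExp (fun i s => (p i s : ℂ)) I f := fun I =>
    ProductWeight.eq_condExp hp hsum (hrange I) (hfix I) (hadj I)
  have hsum' : ∀ i, ∑ s, (p i s : ℂ) = 1 := fun i => by exact_mod_cast hsum i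
  have hEE : ∀ I J, E I * E J = E (I ∩ J) := fun I J => LinearMap.ext fun f => by
    simp only [Module.End.mul_apply, hE, ProductWeight.condExp_condExp hsum']
  exact cluster_mul_cluster_eq_ite hEE hEC
end

section
/- Under a product probability, the cluster component of an elementary product is given by C_I(∏_k f_k) = (∏_{j∉I} E f_j) · ∏_{i∈I} (f_i − E f_i), where each f_k depends only on site k and E f_k is its expectation. -/
/-!
`E_I` is the orthogonal projection onto functions of the sites in `I`, so `E_I (∏ f_k)` is pinned
down by its inner products with such functions. Under a product measure, functions of disjoint
sets of sites are uncorrelated, which gives `E_I (∏ f_k) = (∏_{j ∉ I} E f_j) ∏_{i ∈ I} f_i`.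
Expanding `f_i = (f_i - E f_i) + E f_i` writes this as `∑_{J ⊆ I}` of the claimed right-hand
sides, and a function on subsets is determined by its partial sums over powersets.
-/

open Finset

theorem Finset.eq_of_forall_sum_powerset_eq {α β : Type*} [AddCancelCommMonoid β]
    {a b : Finset α → β} (h : ∀ I : Finset α, ∑ J ∈ I.powerset, a J = ∑ J ∈ I.powerset, b J)
    (I : Finset α) : a I = b I := by
  classical
  induction I using Finset.strongInduction with
  | _ I ih =>
    have hsub : ∑ J ∈ I.powerset.erase I, a J = ∑ J ∈ I.powerset.erase I, b J :=
      sum_congr rfl fun J hJ => ih J <| ssubset_iff_subset_ne.mpr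
        ⟨mem_powerset.mp (mem_of_mem_erase hJ), ne_of_mem_erase hJ⟩
    have hI := h I
    rw [← add_sum_erase _ _ (mem_powerset_self I), ← add_sum_erase _ b (mem_powerset_self I),
      hsub] at hI
    exact add_right_cancel hI

theorem Finset.sum_powerset_prod_compl_mul_prod_sub {ι R : Type*} [Fintype ι] [DecidableEq ι]
    [CommRing R] (m y : ι → R) (I : Finset ι) :
    ∑ J ∈ I.powerset, (∏ j ∈ Jᶜ, m j) * ∏ i ∈ J, (y i - m i) = (∏ j ∈ Iᶜ, m j) * ∏ i ∈ I, y i := by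
  have hcompl : ∀ J ∈ I.powerset, ∏ j ∈ Jᶜ, m j = (∏ j ∈ I \ J, m j) * ∏ j ∈ Iᶜ, m j := by
    intro J hJ
    rw [← prod_sdiff (compl_subset_compl.mpr (mem_powerset.mp hJ)), compl_sdiff_compl]
  calc ∑ J ∈ I.powerset, (∏ j ∈ Jᶜ, m j) * ∏ i ∈ J, (y i - m i)
      = (∏ j ∈ Iᶜ, m j) * ∑ J ∈ I.powerset, (∏ i ∈ J, (y i - m i)) * ∏ j ∈ I \ J, m j := by
        rw [mul_sum]
        exact sum_congr rfl fun J hJ => by rw [hcompl J hJ]; ring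
    _ = (∏ j ∈ Iᶜ, m j) * ∏ i ∈ I, y i := by
        rw [← prod_add]
        simp only [sub_add_cancel]

section ProductMeasure

variable {S : Type*} [Fintype S] [DecidableEq S] {Sps : S → Type*} [∀ i, Fintype (Sps i)]

theorem sum_prod_mul_prod_eq_prod_sum {R : Type*} [CommSemiring R] (q : ∀ i, Sps i → R)
    (hq : ∀ i, ∑ s, q i s = 1) (J : Finset S) (h : ∀ i, Sps i → R) :
    ∑ x : ∀ i, Sps i, (∏ i, q i (x i)) * ∏ j ∈ J, h j (x j) = ∏ j ∈ J, ∑ s, q j s * h j s := by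
  have hx : ∀ x : ∀ i, Sps i, (∏ i, q i (x i)) * ∏ j ∈ J, h j (x j)
      = ∏ i, q i (x i) * if i ∈ J then h i (x i) else 1 := by
    intro x
    rw [prod_mul_distrib, prod_ite_mem, univ_inter]
  have hsite : ∀ i, ∑ s, q i s * (if i ∈ J then h i s else 1)
      = if i ∈ J then ∑ s, q i s * h i s else 1 := by
    intro i
    split_ifs <;> simp [hq]
  simp_rw [hx]
  rw [← Fintype.prod_sum fun i s => q i s * if i ∈ J then h i s else 1]
  simp_rw [hsite, prod_ite_mem, univ_inter]

theorem sum_prod_eq_one {R : Type*} [CommSemiring R] (q : ∀ i, Sps i → R)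
    (hq : ∀ i, ∑ s, q i s = 1) :
    ∑ x : ∀ i, Sps i, ∏ i, q i (x i) = 1 := by
  simpa using sum_prod_mul_prod_eq_prod_sum q hq ∅ fun _ _ => 1

theorem sum_prod_mul_mul_of_depends_compl (q : ∀ i, Sps i → ℂ) (hq : ∀ i, ∑ s, q i s = 1)
    {I : Finset S} {g h : (∀ i, Sps i) → ℂ} (hg : Depends g I) (hh : Depends h Iᶜ) :
    ∑ x, (∏ i, q i (x i)) * (g x * h x)
      = (∑ x, (∏ i, q i (x i)) * g x) * ∑ x, (∏ i, q i (x i)) * h x := by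
  set w : (∀ i, Sps i) → ℂ := fun x => ∏ i, q i (x i)
  -- exchanging the coordinates off `I` between two independent samples preserves the weight
  let swap : Equiv.Perm ((∀ i, Sps i) × ∀ i, Sps i) :=
    Function.Involutive.toPerm (fun z => (I.piecewise z.1 z.2, I.piecewise z.2 z.1)) fun z => by
      ext i <;> by_cases hi : i ∈ I <;> simp [hi]
  have hw : ∀ x y, w (I.piecewise x y) * w (I.piecewise y x) = w x * w y := by
    intro x y
    simp only [w, ← prod_mul_distrib]
    exact prod_congr rfl fun i _ => by by_cases hi : i ∈ I <;> simp [hi, mul_comm]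
  have hgx : ∀ x y, g (I.piecewise x y) = g x := fun x y =>
    hg _ _ fun i hi => by simp [hi]
  have hhy : ∀ x y, h (I.piecewise x y) = h y := fun x y =>
    hh _ _ fun i hi => by simp [(mem_compl.mp hi)]
  let F : ((∀ i, Sps i) × ∀ i, Sps i) → ℂ := fun z => w z.1 * w z.2 * (g z.1 * h z.1)
  calc ∑ x, w x * (g x * h x)
      = ∑ z, F z := by
        rw [Fintype.sum_prod_type]
        refine sum_congr rfl fun x _ => ?_
        rw [← mul_one (w x * _), ← sum_prod_eq_one q hq, mul_sum]
        exact sum_congr rfl fun y _ => by ring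
    _ = ∑ z, F (swap z) := (Equiv.sum_comp swap F).symm
    _ = (∑ x, w x * g x) * ∑ x, w x * h x := by
        rw [sum_mul_sum, Fintype.sum_prod_type]
        refine sum_congr rfl fun x _ => sum_congr rfl fun y _ => ?_
        change F (I.piecewise x y, I.piecewise y x) = _
        simp only [F, hw, hgx, hhy]
        ring

end ProductMeasure

section Projection

variable {S : Type*} [Fintype S] [DecidableEq S] {Sps : S → Type*} [∀ i, Fintype (Sps i)]

def weightedInner (p : ∀ i, Sps i → ℝ) (u v : (∀ i, Sps i) → ℂ) : ℂ :=
  ∑ x, (∏ i, (p i (x i) : ℂ)) * starRingEnd ℂ (u x) * v x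

theorem weightedInner_sub_right (p : ∀ i, Sps i → ℝ) (u v v' : (∀ i, Sps i) → ℂ) :
    weightedInner p u (v - v') = weightedInner p u v - weightedInner p u v' := by
  simp only [weightedInner, Pi.sub_apply, mul_sub, sum_sub_distrib]

theorem eq_zero_of_weightedInner_self_eq_zero {p : ∀ i, Sps i → ℝ} (hp : ∀ i s, 0 < p i s)
    {u : (∀ i, Sps i) → ℂ} (hu : weightedInner p u u = 0) : u = 0 := by
  have hreal : ∑ x, (∏ i, p i (x i)) * Complex.normSq (u x) = 0 := by
    have hcast :
        ((∑ x, (∏ i, p i (x i)) * Complex.normSq (u x) : ℝ) : ℂ) = weightedInner p u u := by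
      push_cast [weightedInner]
      exact sum_congr rfl fun x _ => by rw [Complex.normSq_eq_conj_mul_self]; ring
    exact_mod_cast hcast.trans hu
  funext x
  have hx := (sum_eq_zero_iff_of_nonneg fun y _ =>
    mul_nonneg (prod_nonneg fun i _ => (hp i (y i)).le) (Complex.normSq_nonneg _)).mp hreal x
      (mem_univ x)
  rwa [mul_eq_zero, or_iff_right (prod_pos fun i _ => hp i (x i)).ne',
    Complex.normSq_eq_zero] at hx

structure IsOrthogonalProjectionOn (p : ∀ i, Sps i → ℝ) (I : Finset S)
    (P : ((∀ i, Sps i) → ℂ) → (∀ i, Sps i) → ℂ) : Prop where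
  depends : ∀ f, Depends (P f) I
  eq_self : ∀ f, Depends f I → P f = f
  adjoint : ∀ f g, weightedInner p (P f) g = weightedInner p f (P g)

namespace IsOrthogonalProjectionOn

variable {p : ∀ i, Sps i → ℝ} {I : Finset S} {P : ((∀ i, Sps i) → ℂ) → (∀ i, Sps i) → ℂ}

theorem eq_of_forall_weightedInner_eq (hP : IsOrthogonalProjectionOn p I P)
    (hp : ∀ i s, 0 < p i s) {F G : (∀ i, Sps i) → ℂ} (hG : Depends G I)
    (hFG : ∀ g, Depends g I → weightedInner p g F = weightedInner p g G) : P F = G := by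
  set H := P F - G
  have hH : Depends H I := fun x y hxy => by
    simp only [H, Pi.sub_apply, hP.depends F x y hxy, hG x y hxy]
  have hHH : weightedInner p H H = 0 := by
    rw [weightedInner_sub_right, ← hP.adjoint, hP.eq_self H hH, hFG H hH, sub_self]
  exact sub_eq_zero.mp (eq_zero_of_weightedInner_self_eq_zero hp hHH)

theorem apply_prod (hP : IsOrthogonalProjectionOn p I P) (hp : ∀ i s, 0 < p i s)
    (hsum : ∀ i, ∑ s, p i s = 1) (f : ∀ i, Sps i → ℂ) :
    P (fun x => ∏ k, f k (x k)) =
      fun x => (∏ j ∈ Iᶜ, ∑ s, (p j s : ℂ) * f j s) * ∏ i ∈ I, f i (x i) := by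
  have hq : ∀ i, ∑ s, (p i s : ℂ) = 1 := fun i => by exact_mod_cast hsum i
  have hprod : ∀ J : Finset S, Depends (fun x => ∏ j ∈ J, f j (x j)) J := fun J x y hxy =>
    prod_congr rfl fun j hj => by rw [hxy j hj]
  refine hP.eq_of_forall_weightedInner_eq hp (fun x y hxy => congrArg _ (hprod I x y hxy))
    fun g hg => ?_
  have hgf : Depends (fun x => starRingEnd ℂ (g x) * ∏ i ∈ I, f i (x i)) I := fun x y hxy => by
    simp only [hg x y hxy, hprod I x y hxy]
  calc weightedInner p g (fun x => ∏ k, f k (x k))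
      = ∑ x, (∏ i, (p i (x i) : ℂ)) *
          ((starRingEnd ℂ (g x) * ∏ i ∈ I, f i (x i)) * ∏ j ∈ Iᶜ, f j (x j)) :=
        sum_congr rfl fun x _ => by
          dsimp only
          rw [← prod_mul_prod_compl I fun k => f k (x k)]
          ring
    _ = (∑ x, (∏ i, (p i (x i) : ℂ)) * (starRingEnd ℂ (g x) * ∏ i ∈ I, f i (x i))) *
          ∏ j ∈ Iᶜ, ∑ s, (p j s : ℂ) * f j s := by
        rw [sum_prod_mul_mul_of_depends_compl _ hq hgf (hprod Iᶜ),
          sum_prod_mul_prod_eq_prod_sum _ hq]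
    _ = weightedInner p g
          (fun x => (∏ j ∈ Iᶜ, ∑ s, (p j s : ℂ) * f j s) * ∏ i ∈ I, f i (x i)) := by
        rw [weightedInner, sum_mul]
        exact sum_congr rfl fun x _ => by ring

end IsOrthogonalProjectionOn

end Projection

theorem cluster_component_of_elementary_product {S : Type*} [Fintype S] [DecidableEq S]
    {Sps : S → Type*} [∀ i, Fintype (Sps i)]
    (p : ∀ i, Sps i → ℝ) (hp : ∀ i s, 0 < p i s) (hsum : ∀ i, ∑ s, p i s = 1)
    (E : Finset S → (((∀ i, Sps i) → ℂ) →ₗ[ℂ] ((∀ i, Sps i) → ℂ)))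
    (hrange : ∀ I f, Depends (E I f) I)
    (hfix : ∀ I f, Depends f I → E I f = f)
    (hadj : ∀ (I : Finset S) (f g : (∀ i, Sps i) → ℂ),
      ∑ x, (∏ i, (p i (x i) : ℂ)) * (starRingEnd ℂ) ((E I f) x) * g x
        = ∑ x, (∏ i, (p i (x i) : ℂ)) * (starRingEnd ℂ) (f x) * (E I g) x)
    (C : Finset S → (((∀ i, Sps i) → ℂ) →ₗ[ℂ] ((∀ i, Sps i) → ℂ)))
    (hEC : ∀ I : Finset S, E I = ∑ J ∈ I.powerset, C J)
    (f : ∀ i, Sps i → ℂ) (I : Finset S) :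
    C I (fun x => ∏ k, f k (x k)) =
      fun x => (∏ j ∈ Iᶜ, ∑ s, (p j s : ℂ) * f j s) *
        ∏ i ∈ I, (f i (x i) - ∑ s, (p i s : ℂ) * f i s) := by
  set m : S → ℂ := fun j => ∑ s, (p j s : ℂ) * f j s
  refine eq_of_forall_sum_powerset_eq (a := fun J => C J fun x => ∏ k, f k (x k))
    (b := fun J x => (∏ j ∈ Jᶜ, m j) * ∏ i ∈ J, (f i (x i) - m i)) (fun J => ?_) I
  have hE : IsOrthogonalProjectionOn p J (E J) := ⟨hrange J, hfix J, hadj J⟩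
  calc ∑ K ∈ J.powerset, C K (fun x => ∏ k, f k (x k))
      = E J (fun x => ∏ k, f k (x k)) := by rw [hEC J, LinearMap.sum_apply]
    _ = fun x => (∏ j ∈ Jᶜ, m j) * ∏ i ∈ J, f i (x i) := hE.apply_prod hp hsum f
    _ = ∑ K ∈ J.powerset, fun x => (∏ j ∈ Kᶜ, m j) * ∏ i ∈ K, (f i (x i) - m i) := by
      funext x
      rw [Finset.sum_apply, sum_powerset_prod_compl_mul_prod_sub]
end

section
/- Let H be a finite-dimensional Hilbert space with subspaces S and M, and let P_S, P_M be the orthogonal projections. Then S decomposes orthogonally as S = P_S(M) ⊕ (S ∩ ker P_M), M = P_M(S) ⊕ (M ∩ ker P_S), and the restricted maps P_M : P_S(M) → P_M(S) and P_S : P_M(S) → P_S(M) are linear bijections. -/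
open Submodule

section Aux

variable {H : Type*} [NormedAddCommGroup H] [InnerProductSpace ℂ H] [FiniteDimensional ℂ H]

private noncomputable def Pj (S : Submodule ℂ H) : H →ₗ[ℂ] H :=
  S.subtype.comp S.orthogonalProjectionOnto.toLinearMap

private lemma Pj_mem (S : Submodule ℂ H) (x : H) : Pj S x ∈ S :=
  (S.orthogonalProjectionOnto x).2

private lemma Pj_self {S : Submodule ℂ H} {x : H} (hx : x ∈ S) : Pj S x = x := by
  exact (starProjection_eq_self_iff (K := S) (v := x)).2 hx

private lemma Pj_inner (S : Submodule ℂ H) (x y : H) :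
    (inner ℂ (Pj S x) y : ℂ) = inner ℂ x (Pj S y) :=
  inner_starProjection_left_eq_right S x y

private lemma aux_le (S M : Submodule ℂ H) : M.map (Pj S) ≤ S := by
  rintro _ ⟨m, hm, rfl⟩
  exact Pj_mem S m

private lemma aux_orth (S M : Submodule ℂ H) :
    ∀ u ∈ M.map (Pj S), ∀ v ∈ S ⊓ LinearMap.ker (Pj M),
      (inner ℂ u v : ℂ) = 0 := by
  rintro u ⟨m, hm, rfl⟩ v ⟨hvS, hv0⟩
  have hv0' : Pj M v = 0 := hv0
  calc (inner ℂ (Pj S m) v : ℂ) = inner ℂ m (Pj S v) := Pj_inner S m v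
    _ = inner ℂ m v := by rw [Pj_self hvS]
    _ = inner ℂ (Pj M m) v := by rw [Pj_self hm]
    _ = inner ℂ m (Pj M v) := Pj_inner M m v
    _ = 0 := by rw [hv0', inner_zero_right]

private lemma aux_decomp (S M : Submodule ℂ H) :
    S = M.map (Pj S) ⊔ (S ⊓ LinearMap.ker (Pj M)) := by
  apply le_antisymm
  · intro s hs
    set S' := M.map (Pj S) with hS'
    set p := ((S'.orthogonalProjectionOnto s : S') : H) with hp
    have hpS' : p ∈ S' := (S'.orthogonalProjectionOnto s).2
    have hpS : p ∈ S := aux_le S M hpS'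
    have hq : s - p ∈ S'ᗮ := sub_starProjection_mem_orthogonal (K := S') s
    have hqS : s - p ∈ S := S.sub_mem hs hpS
    have h2 : Pj S (Pj M (s - p)) ∈ S' := ⟨Pj M (s - p), Pj_mem M _, rfl⟩
    have hker : Pj M (s - p) = 0 := by
      have h1 : (inner ℂ (Pj M (s - p)) (Pj M (s - p)) : ℂ) = 0 := by
        calc (inner ℂ (Pj M (s - p)) (Pj M (s - p)) : ℂ)
            = inner ℂ (Pj M (Pj M (s - p))) (s - p) := (Pj_inner M (Pj M (s - p)) (s - p)).symm
          _ = inner ℂ (Pj M (s - p)) (Pj S (s - p)) := by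
              rw [Pj_self (Pj_mem M (s - p)), Pj_self hqS]
          _ = inner ℂ (Pj S (Pj M (s - p))) (s - p) := (Pj_inner S (Pj M (s - p)) (s - p)).symm
          _ = 0 := (Submodule.mem_orthogonal _ _).1 hq _ h2
      exact inner_self_eq_zero.1 h1
    exact mem_sup.2 ⟨p, hpS', s - p, ⟨hqS, hker⟩, by abel⟩
  · exact sup_le (aux_le S M) inf_le_left

private lemma aux_inj (S M : Submodule ℂ H) :
    ∀ u₁ ∈ M.map (Pj S), ∀ u₂ ∈ M.map (Pj S), Pj M u₁ = Pj M u₂ → u₁ = u₂ := by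
  intro u₁ h₁ u₂ h₂ heq
  have hu : u₁ - u₂ ∈ M.map (Pj S) := Submodule.sub_mem _ h₁ h₂
  have hker : Pj M (u₁ - u₂) = 0 := by rw [map_sub, heq, sub_self]
  have h0 : (inner ℂ (u₁ - u₂) (u₁ - u₂) : ℂ) = 0 :=
    aux_orth S M _ hu _ ⟨S.sub_mem (aux_le S M h₁) (aux_le S M h₂), hker⟩
  have := inner_self_eq_zero.1 h0
  exact sub_eq_zero.1 this

private lemma aux_surj (S M : Submodule ℂ H) :
    ∀ v ∈ S.map (Pj M), ∃ u ∈ M.map (Pj S), Pj M u = v := by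
  rintro _ ⟨s, hs, rfl⟩
  have hs' : s ∈ M.map (Pj S) ⊔ (S ⊓ LinearMap.ker (Pj M)) := (aux_decomp S M) ▸ hs
  rcases mem_sup.1 hs' with ⟨u, hu, w, hw, rfl⟩
  refine ⟨u, hu, ?_⟩
  have hw0 : Pj M w = 0 := hw.2
  rw [map_add, hw0, add_zero]

end Aux

theorem shadow_model_geometry {H : Type*} [NormedAddCommGroup H]
    [InnerProductSpace ℂ H] [FiniteDimensional ℂ H]
    (S M : Submodule ℂ H) :
    let PS : H →ₗ[ℂ] H := S.subtype.comp S.orthogonalProjectionOnto.toLinearMap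
    let PM : H →ₗ[ℂ] H := M.subtype.comp M.orthogonalProjectionOnto.toLinearMap
    let S' : Submodule ℂ H := M.map PS
    let M' : Submodule ℂ H := S.map PM
    -- orthogonal decompositions
    (S = S' ⊔ (S ⊓ LinearMap.ker PM)) ∧
    (∀ u ∈ S', ∀ v ∈ S ⊓ LinearMap.ker PM, inner (𝕜 := ℂ) u v = 0) ∧
    (M = M' ⊔ (M ⊓ LinearMap.ker PS)) ∧
    (∀ u ∈ M', ∀ v ∈ M ⊓ LinearMap.ker PS, inner (𝕜 := ℂ) u v = 0) ∧
    -- the restricted projections are mutually inverse bijections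
    (∀ u ∈ S', PM u ∈ M') ∧ (∀ v ∈ M', PS v ∈ S') ∧
    (∀ u₁ ∈ S', ∀ u₂ ∈ S', PM u₁ = PM u₂ → u₁ = u₂) ∧
    (∀ v ∈ M', ∃ u ∈ S', PM u = v) ∧
    (∀ v₁ ∈ M', ∀ v₂ ∈ M', PS v₁ = PS v₂ → v₁ = v₂) ∧
    (∀ u ∈ S', ∃ v ∈ M', PS v = u) := by
  intro PS PM S' M'
  have hPS : PS = Pj S := rfl
  have hPM : PM = Pj M := rfl
  refine ⟨aux_decomp S M, aux_orth S M, aux_decomp M S, aux_orth M S,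
    ?_, ?_, aux_inj S M, aux_surj S M, aux_inj M S, aux_surj M S⟩
  · intro u hu
    exact Submodule.mem_map_of_mem (aux_le S M hu)
  · intro v hv
    exact Submodule.mem_map_of_mem (aux_le M S hv)
end
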